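/- arXiv:1505.00369 — 4 statements merged into one kernel-verified Lean document; each statement's English description precedes it below -/
import Mathlib

section
/- Fix positive integers T and M with M ≤ log(T), and let a ≥ (MT/log T)^{1/M}. Then for every Δ > 0, T·Δ·exp(−a^{M−1}Δ²/32) ≤ 32·a·max(1, log(TΔ²/32))/Δ. -/
open Real

/-!
Write `b = a^(M-1)` and `x = Δ²/32`; the claim is `T x e^{-b x} ≤ a · blog(T x)`. When `T x ≤ a`
this is trivial. Otherwise `u e^{-u} ≤ e^{-1}` gives `T x e^{-b x} ≤ T / (e b)`, while
`blog(T x) ≥ log a`, so it suffices that `T ≤ e a^M log a`. This follows from `a^M ≥ M T / log T`: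
taking logarithms, `M log a ≥ log T - log log T ≥ log T / e`, because `log t ≤ t / e`.
-/

lemma log_le_div_exp_one {x : ℝ} (hx : 0 < x) : log x ≤ x / exp 1 := by
  have h := log_le_sub_one_of_pos (div_pos hx (exp_pos 1))
  rw [log_div hx.ne' (exp_pos 1).ne', log_exp] at h
  linarith

lemma le_exp_one_mul_sub_log {t : ℝ} (ht : 0 < t) : t ≤ exp 1 * (t - log t) := by
  have hlog := log_le_div_exp_one ht
  have hcancel : exp 1 * (t / exp 1) = t := mul_div_cancel₀ t (exp_pos 1).ne'
  nlinarith [exp_one_gt_two]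

lemma le_pow_of_rpow_one_div_le {c a : ℝ} {M : ℕ} (hc : 0 ≤ c) (hM : M ≠ 0)
    (h : c ^ ((1 : ℝ) / M) ≤ a) : c ≤ a ^ M := by
  rw [one_div] at h
  calc c = (c ^ ((M : ℝ)⁻¹)) ^ M := (rpow_inv_natCast_pow hc hM).symm
    _ ≤ a ^ M := pow_le_pow_left₀ (rpow_nonneg hc _) h M

lemma le_exp_one_mul_pow_mul_log {T a : ℝ} {M : ℕ} (hM : 0 < M) (hT : 1 < T)
    (h : M * T / log T ≤ a ^ M) : T ≤ exp 1 * a ^ M * log a := by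
  have hM1 : (1 : ℝ) ≤ M := by exact_mod_cast hM
  have hlogT : 0 < log T := log_pos hT
  have hT0 : 0 < T := by linarith
  have hlog_pow : log T - log (log T) ≤ M * log a := by
    have hdiv : T / log T ≤ M * T / log T := by
      gcongr
      nlinarith
    rw [← log_pow, ← log_div hT0.ne' hlogT.ne']
    exact log_le_log (by positivity) (hdiv.trans h)
  have hratio : log T / M ≤ exp 1 * log a := by
    rw [div_le_iff₀ (by positivity)]
    nlinarith [le_exp_one_mul_sub_log hlogT, exp_pos 1]
  calc T = M * T / log T * (log T / M) := by field_simp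
    _ ≤ a ^ M * (exp 1 * log a) :=
        mul_le_mul h hratio (by positivity) ((by positivity : (0 : ℝ) < M * T / log T).le.trans h)
    _ = exp 1 * a ^ M * log a := by ring

lemma mul_mul_exp_neg_le_mul_max_one_log {T x a b : ℝ} (hT : 0 ≤ T) (hx : 0 ≤ x) (ha : 0 < a)
    (hb : 0 < b) (h : T ≤ exp 1 * (a * b) * log a) :
    T * x * exp (-(b * x)) ≤ a * max 1 (log (T * x)) := by
  rcases le_or_gt (T * x) a with hle | hlt
  · calc T * x * exp (-(b * x)) ≤ T * x :=
          mul_le_of_le_one_right (by positivity)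
            (exp_le_one_iff.2 (neg_nonpos.2 (mul_nonneg hb.le hx)))
      _ ≤ a := hle
      _ ≤ a * max 1 (log (T * x)) := le_mul_of_one_le_right ha.le (le_max_left _ _)
  · calc T * x * exp (-(b * x)) = T / b * (b * x * exp (-(b * x))) := by field_simp
      _ ≤ T / b * exp (-1) :=
          mul_le_mul_of_nonneg_left (mul_exp_neg_le_exp_neg_one _) (by positivity)
      _ ≤ a * log a := by
          rw [exp_neg, ← div_eq_mul_inv, div_div, div_le_iff₀ (by positivity)]
          linarith
      _ ≤ a * log (T * x) := mul_le_mul_of_nonneg_left (log_le_log ha hlt.le) ha.le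
      _ ≤ a * max 1 (log (T * x)) := mul_le_mul_of_nonneg_left (le_max_right _ _) ha.le

theorem stmt5_general (T M : ℕ) (hM : 0 < M) (hMT : (M : ℝ) ≤ Real.log T)
    (a : ℝ) (ha : ((M : ℝ) * T / Real.log T) ^ ((1 : ℝ) / M) ≤ a) :
    ∀ Δ : ℝ, 0 < Δ →
      (T : ℝ) * Δ * Real.exp (-(a ^ (M - 1) * Δ ^ 2) / 32) ≤
        32 * a * max 1 (Real.log ((T : ℝ) * Δ ^ 2 / 32)) / Δ := by
  intro Δ hΔ
  have hlogT : 0 < log (T : ℝ) := lt_of_lt_of_le (by exact_mod_cast hM) hMT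
  have hT : 1 < (T : ℝ) := (log_pos_iff (Nat.cast_nonneg T)).1 hlogT
  have hc : 0 < (M : ℝ) * T / log T := by positivity
  have ha0 : 0 < a := (rpow_pos_of_pos hc _).trans_le ha
  have hpow : a * a ^ (M - 1) = a ^ M := by rw [← pow_succ', Nat.sub_add_cancel hM]
  have hgrowth := le_exp_one_mul_pow_mul_log hM hT (le_pow_of_rpow_one_div_le hc.le hM.ne' ha)
  have key := mul_mul_exp_neg_le_mul_max_one_log (x := Δ ^ 2 / 32) (by positivity) (by positivity)
    ha0 (pow_pos ha0 _) (hpow ▸ hgrowth)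
  rw [le_div_iff₀ hΔ]
  calc (T : ℝ) * Δ * exp (-(a ^ (M - 1) * Δ ^ 2) / 32) * Δ
      = 32 * (T * (Δ ^ 2 / 32) * exp (-(a ^ (M - 1) * (Δ ^ 2 / 32)))) := by ring_nf
    _ ≤ 32 * (a * max 1 (log (T * (Δ ^ 2 / 32)))) := by gcongr
    _ = 32 * a * max 1 (log ((T : ℝ) * Δ ^ 2 / 32)) := by rw [mul_div_assoc]; ring

/-- Lemma for the geometric grid: if `M ≤ log T` and
`a ≥ (M T / log T)^{1/M}`, then for every `Δ > 0`,
`T Δ exp(-a^{M-1} Δ² / 32) ≤ 32 a blog(T Δ² / 32) / Δ`. -/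
theorem stmt5 (T M : ℕ) (hT : 0 < T) (hM : 0 < M) (hMT : (M : ℝ) ≤ Real.log T)
    (a : ℝ) (ha : ((M : ℝ) * T / Real.log T) ^ ((1 : ℝ) / M) ≤ a) :
    ∀ Δ : ℝ, 0 < Δ →
      (T : ℝ) * Δ * Real.exp (-(a ^ (M - 1) * Δ ^ 2) / 32) ≤
        32 * a * max 1 (Real.log ((T : ℝ) * Δ ^ 2 / 32)) / Δ :=
  stmt5_general T M hM hMT a ha
end

section
/- Fix a ≥ 1, b ≥ e, and define the sequence u_1 = a, u_{k+1} = a·√(u_k / log(b/u_k)). Set S_k = 2 − 2^{−k} for k ≥ 0 and S_k = 0 for k < 0. If M is such that 15·a^{S_{M−2}} ≤ b, then for all k ∈ {1, ..., M−3}, u_k ≥ a^{S_{k−1}} / (15·(log(b/a^{S_{k−2}}))^{S_{k−2}/2}). -/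
/-!
Induction on `k`, carrying along the upper bound `u k ≤ a ^ S (k - 1)`. Write `s, p, q` for
`S (k - 2), S (k - 1), S k`, so that `p = 1 + s / 2` and `q = 1 + p / 2`, and put
`L = log (b / a ^ s)`, `L' = log (b / a ^ p)`. Since `15 a ^ q ≤ b`, the exponent gap `p - s`
costs at most twice what is left in `L'`, whence `L ≤ 3 L'`; with `v` the lower bound for `u k`
this gives `log (b / v) ≤ 5 L'`. As `x ↦ x / log (b / x)` is increasing,
`u k / log (b / u k) ≥ a ^ p / (15 · 3 · 5 · L' ^ p)`, and `15 · 3 · 5 = 15 ^ 2`, so the square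
root in the recursion returns exactly the lower bound for `u (k + 1)`.
-/

open Real

noncomputable def Sfun (k : ℤ) : ℝ := if k < 0 then 0 else 2 - (2 : ℝ) ^ (-k)

lemma Sfun_of_neg {k : ℤ} (h : k < 0) : Sfun k = 0 := if_pos h

lemma Sfun_of_nonneg {k : ℤ} (h : 0 ≤ k) : Sfun k = 2 - 2 ^ (-k) := if_neg (not_lt.mpr h)

lemma Sfun_nonneg (k : ℤ) : 0 ≤ Sfun k := by
  rcases lt_or_ge k 0 with h | h
  · rw [Sfun_of_neg h]
  · rw [Sfun_of_nonneg h, sub_nonneg]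
    exact (zpow_le_one_of_nonpos₀ one_le_two (neg_nonpos.mpr h)).trans one_le_two

lemma Sfun_le_two (k : ℤ) : Sfun k ≤ 2 := by
  rcases lt_or_ge k 0 with h | h
  · rw [Sfun_of_neg h]; norm_num
  · rw [Sfun_of_nonneg h, sub_le_self_iff]; positivity

lemma Sfun_mono : Monotone Sfun := by
  intro j k hjk
  rcases lt_or_ge j 0 with hj | hj
  · rw [Sfun_of_neg hj]; exact Sfun_nonneg k
  · rw [Sfun_of_nonneg hj, Sfun_of_nonneg (hj.trans hjk)]
    gcongr
    norm_num

lemma Sfun_eq_one_add_half {k : ℤ} (h : 0 ≤ k) : Sfun k = 1 + Sfun (k - 1) / 2 := by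
  rcases h.eq_or_lt with rfl | hk
  · rw [Sfun_of_nonneg le_rfl, Sfun_of_neg (by norm_num)]; norm_num
  · have h2 : (2 : ℝ) ^ (-(k - 1)) = 2 ^ (-k) * 2 := by
      rw [neg_sub', sub_neg_eq_add, zpow_add_one₀ two_ne_zero]
    rw [Sfun_of_nonneg h, Sfun_of_nonneg (by omega), h2]
    ring

lemma one_le_log_fifteen : 1 ≤ log 15 := by
  rw [le_log_iff_exp_le (by norm_num)]
  linarith [exp_one_lt_d9]

lemma log_fifteen_le_log_div {b y : ℝ} (hy : 0 < y) (h : 15 * y ≤ b) :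
    log 15 ≤ log (b / y) :=
  log_le_log (by norm_num) ((le_div_iff₀ hy).mpr h)

lemma div_log_div_le_div_log_div {b x y : ℝ} (hb : 0 < b) (hx : 0 < x) (hxy : x ≤ y)
    (hy : 0 < log (b / y)) : x / log (b / x) ≤ y / log (b / y) :=
  div_le_div₀ (hx.le.trans hxy) hxy hy
    (log_le_log (div_pos hb (hx.trans_le hxy)) (div_le_div_of_nonneg_left hb.le hx hxy))

lemma log_div_rpow_anti {a b s t : ℝ} (ha : 1 ≤ a) (hb : 0 < b) (hst : s ≤ t) :
    log (b / a ^ t) ≤ log (b / a ^ s) :=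
  have ha0 : 0 < a := one_pos.trans_le ha
  log_le_log (div_pos hb (rpow_pos_of_pos ha0 t))
    (div_le_div_of_nonneg_left hb.le (rpow_pos_of_pos ha0 s) (rpow_le_rpow_of_exponent_le ha hst))

lemma fifteen_mul_rpow_le {a b p q : ℝ} (ha : 1 ≤ a) (hpq : p ≤ q) (hb : 15 * a ^ q ≤ b) :
    15 * a ^ p ≤ b :=
  (mul_le_mul_of_nonneg_left (rpow_le_rpow_of_exponent_le ha hpq) (by norm_num)).trans hb

lemma log_fifteen_le_log_div_rpow {a b p q : ℝ} (ha : 1 ≤ a) (hpq : p ≤ q)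
    (hb : 15 * a ^ q ≤ b) : log 15 ≤ log (b / a ^ p) :=
  log_fifteen_le_log_div (rpow_pos_of_pos (one_pos.trans_le ha) p) (fifteen_mul_rpow_le ha hpq hb)

/-- With `s = S (k - 2)` and `p = S (k - 1)` this is the claimed lower bound for `u k`. -/
noncomputable def gridBound (a b s p : ℝ) : ℝ := a ^ p / (15 * log (b / a ^ s) ^ (s / 2))

section Step

variable {a b s p q : ℝ}

/-- `log (b / a ^ s) - log (b / a ^ p) = (p - s) log a = 2 (q - p) log a`, while
`log (b / a ^ p) ≥ log 15 + (q - p) log a`. -/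
lemma log_div_rpow_le_three_mul (ha : 1 ≤ a) (hp : p = 1 + s / 2) (hq : q = 1 + p / 2)
    (hb : 15 * a ^ q ≤ b) : log (b / a ^ s) ≤ 3 * log (b / a ^ p) := by
  have ha0 : 0 < a := one_pos.trans_le ha
  have hb0 : 0 < b := by linarith [rpow_pos_of_pos ha0 q]
  have hlog (t : ℝ) : log (b / a ^ t) = log b - t * log a := by
    rw [log_div hb0.ne' (rpow_pos_of_pos ha0 t).ne', log_rpow ha0]
  have hlogb : log 15 + q * log a ≤ log b := by
    have := log_le_log (by positivity) hb
    rwa [log_mul (by norm_num) (rpow_pos_of_pos ha0 q).ne', log_rpow ha0] at this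
  rw [hlog, hlog]
  nlinarith [log_nonneg ha, one_le_log_fifteen]

lemma log_div_gridBound (ha : 0 < a) (hb : 0 < b) (hL : 0 < log (b / a ^ s)) :
    log (b / gridBound a b s p) =
      log (b / a ^ p) + log 15 + s / 2 * log (log (b / a ^ s)) := by
  have hLs : 0 < log (b / a ^ s) ^ (s / 2) := rpow_pos_of_pos hL _
  have hap : 0 < a ^ p := rpow_pos_of_pos ha p
  rw [gridBound, div_div_eq_mul_div, log_div (by positivity) hap.ne', log_div hb.ne' hap.ne',
    log_mul hb.ne' (by positivity), log_mul (by norm_num) hLs.ne', log_rpow hL]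
  ring

lemma log_div_gridBound_le (ha : 1 ≤ a) (hs2 : s ≤ 2) (hp : p = 1 + s / 2) (hq : q = 1 + p / 2)
    (hb : 15 * a ^ q ≤ b) : log (b / gridBound a b s p) ≤ 5 * log (b / a ^ p) := by
  have ha0 : 0 < a := one_pos.trans_le ha
  have hb0 : 0 < b := by linarith [rpow_pos_of_pos ha0 q]
  have hL' : log 15 ≤ log (b / a ^ p) := log_fifteen_le_log_div_rpow ha (by linarith) hb
  have hL1 : 1 ≤ log (b / a ^ s) := by
    linarith [one_le_log_fifteen, log_div_rpow_anti ha hb0 (show s ≤ p by linarith)]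
  have hlogL : s / 2 * log (log (b / a ^ s)) ≤ log (b / a ^ s) :=
    calc s / 2 * log (log (b / a ^ s)) ≤ log (log (b / a ^ s)) :=
          mul_le_of_le_one_left (log_nonneg hL1) (by linarith)
      _ ≤ log (b / a ^ s) := log_le_self (by linarith)
  rw [log_div_gridBound ha0 hb0 (by linarith)]
  linarith [log_div_rpow_le_three_mul ha hp hq hb]

lemma div_le_gridBound_div_log (ha : 1 ≤ a) (hs0 : 0 ≤ s) (hs2 : s ≤ 2) (hp : p = 1 + s / 2)
    (hq : q = 1 + p / 2) (hb : 15 * a ^ q ≤ b) :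
    a ^ p / (225 * log (b / a ^ p) ^ p) ≤ gridBound a b s p / log (b / gridBound a b s p) := by
  have ha0 : 0 < a := one_pos.trans_le ha
  have hb0 : 0 < b := by linarith [rpow_pos_of_pos ha0 q]
  set L := log (b / a ^ s)
  set L' := log (b / a ^ p)
  have hL'1 : 1 ≤ L' :=
    one_le_log_fifteen.trans (log_fifteen_le_log_div_rpow ha (by linarith) hb)
  have hL1 : 1 ≤ L := hL'1.trans (log_div_rpow_anti ha hb0 (by linarith))
  have hL' : 0 < L' := by linarith
  have hL : 0 < L := by linarith
  have hW : 0 < log (b / gridBound a b s p) := by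
    rw [log_div_gridBound ha0 hb0 hL]
    nlinarith [log_nonneg hL1, one_le_log_fifteen]
  have hLs : L ^ (s / 2) ≤ 3 * L' ^ (s / 2) :=
    calc L ^ (s / 2) ≤ (3 * L') ^ (s / 2) :=
          rpow_le_rpow hL.le (log_div_rpow_le_three_mul ha hp hq hb) (by linarith)
      _ = 3 ^ (s / 2) * L' ^ (s / 2) := mul_rpow (by norm_num) hL'.le
      _ ≤ 3 * L' ^ (s / 2) := by
          gcongr
          exact rpow_le_self_of_one_le (by norm_num) (by linarith)
  rw [gridBound, div_div]
  refine div_le_div_of_nonneg_left (rpow_pos_of_pos ha0 p).le (by positivity) ?_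
  calc 15 * L ^ (s / 2) * log (b / gridBound a b s p)
      ≤ 15 * (3 * L' ^ (s / 2)) * (5 * L') := by
        gcongr
        exact log_div_gridBound_le ha hs2 hp hq hb
    _ = 225 * L' ^ p := by rw [hp, rpow_add hL', rpow_one]; ring

lemma gridBound_eq_mul_sqrt (ha : 0 < a) (hL' : 0 ≤ log (b / a ^ p)) (hq : q = 1 + p / 2) :
    gridBound a b p q = a * √(a ^ p / (225 * log (b / a ^ p) ^ p)) := by
  have hsq : a ^ p / (225 * log (b / a ^ p) ^ p) =
      (a ^ (p / 2) / (15 * log (b / a ^ p) ^ (p / 2))) ^ 2 := by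
    rw [div_pow, mul_pow, ← rpow_mul_natCast ha.le, ← rpow_mul_natCast hL']
    norm_num
  rw [hsq, sqrt_sq (by positivity), gridBound, hq, rpow_add ha, rpow_one, mul_div_assoc]

theorem gridBound_step (ha : 1 ≤ a) (hs0 : 0 ≤ s) (hs2 : s ≤ 2) (hp : p = 1 + s / 2)
    (hq : q = 1 + p / 2) (hb : 15 * a ^ q ≤ b) {x : ℝ} (hlow : gridBound a b s p ≤ x)
    (hup : x ≤ a ^ p) :
    gridBound a b p q ≤ a * √(x / log (b / x)) ∧ a * √(x / log (b / x)) ≤ a ^ q := by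
  have ha0 : 0 < a := one_pos.trans_le ha
  have hb0 : 0 < b := by linarith [rpow_pos_of_pos ha0 q]
  have hL' : log 15 ≤ log (b / a ^ p) := log_fifteen_le_log_div_rpow ha (by linarith) hb
  have hL : 0 < log (b / a ^ s) := by
    linarith [one_le_log_fifteen, log_div_rpow_anti ha hb0 (show s ≤ p by linarith)]
  have hv : 0 < gridBound a b s p :=
    div_pos (rpow_pos_of_pos ha0 p) (mul_pos (by norm_num) (rpow_pos_of_pos hL _))
  have hx : 0 < x := hv.trans_le hlow
  have hlogx : 1 ≤ log (b / x) := one_le_log_fifteen.trans <| log_fifteen_le_log_div hx <|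
    (mul_le_mul_of_nonneg_left hup (by norm_num)).trans (fifteen_mul_rpow_le ha (by linarith) hb)
  constructor
  · rw [gridBound_eq_mul_sqrt ha0 (by linarith [one_le_log_fifteen]) hq]
    refine mul_le_mul_of_nonneg_left (sqrt_le_sqrt ?_) ha0.le
    exact (div_le_gridBound_div_log ha hs0 hs2 hp hq hb).trans
      (div_log_div_le_div_log_div hb0 hv hlow (by linarith))
  · calc a * √(x / log (b / x)) ≤ a * √(a ^ p) := by
          gcongr
          exact (div_le_self hx.le hlogx).trans hup
      _ = a ^ q := by
          rw [sqrt_eq_rpow, ← rpow_mul ha0.le, hq, rpow_add ha0, rpow_one]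
          ring_nf

end Step

theorem stmt6_general (a b : ℝ) (ha : 1 ≤ a)
    (u : ℕ → ℝ) (hu1 : u 1 = a)
    (hurec : ∀ k : ℕ, 1 ≤ k → u (k + 1) = a * Real.sqrt (u k / Real.log (b / u k)))
    (M : ℕ) (hM : 15 * a ^ Sfun ((M : ℤ) - 2) ≤ b) :
    ∀ k : ℕ, 1 ≤ k → k ≤ M - 3 →
      a ^ Sfun ((k : ℤ) - 1) /
          (15 * (Real.log (b / a ^ Sfun ((k : ℤ) - 2))) ^ (Sfun ((k : ℤ) - 2) / 2)) ≤
        u k := by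
  suffices h : ∀ k : ℕ, 1 ≤ k → k ≤ M - 3 →
      gridBound a b (Sfun (k - 2)) (Sfun (k - 1)) ≤ u k ∧ u k ≤ a ^ Sfun (k - 1) from
    fun k hk hkM => (h k hk hkM).1
  intro k hk
  induction k, hk using Nat.le_induction with
  | base =>
    intro _
    have hS : Sfun (-1) = 0 := Sfun_of_neg (by norm_num)
    rw [hu1, gridBound, Nat.cast_one, sub_self, Sfun_eq_one_add_half le_rfl, zero_sub,
      show (1 : ℤ) - 2 = -1 by norm_num, hS]
    norm_num
    linarith
  | succ k hk ih =>
    intro hkM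
    obtain ⟨hlow, hup⟩ := ih (by omega)
    have hp : Sfun (k - 1) = 1 + Sfun (k - 2) / 2 := by
      rw [Sfun_eq_one_add_half (by omega), sub_sub]; norm_num
    have hq : Sfun k = 1 + Sfun (k - 1) / 2 := Sfun_eq_one_add_half (by omega)
    rw [hurec k hk, Nat.cast_succ, add_sub_cancel_right, show (k : ℤ) + 1 - 2 = k - 1 by ring]
    exact gridBound_step ha (Sfun_nonneg _) (Sfun_le_two _) hp hq
      (fifteen_mul_rpow_le ha (Sfun_mono (by omega)) hM) hlow hup

/-- Induction lemma for the minimax grid: with `u₁ = a` and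
`u_{k+1} = a √(u_k / log(b / u_k))`, if `15 a^{S_{M-2}} ≤ b` then for all
`k ∈ [1, M-3]`, `u_k ≥ a^{S_{k-1}} / (15 (log (b / a^{S_{k-2}}))^{S_{k-2}/2})`. -/
theorem stmt6 (a b : ℝ) (ha : 1 ≤ a) (hb : Real.exp 1 ≤ b)
    (u : ℕ → ℝ) (hu1 : u 1 = a)
    (hurec : ∀ k : ℕ, 1 ≤ k → u (k + 1) = a * Real.sqrt (u k / Real.log (b / u k)))
    (M : ℕ) (hM : 15 * a ^ Sfun ((M : ℤ) - 2) ≤ b) :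
    ∀ k : ℕ, 1 ≤ k → k ≤ M - 3 →
      a ^ Sfun ((k : ℤ) - 1) /
          (15 * (Real.log (b / a ^ Sfun ((k : ℤ) - 2))) ^ (Sfun ((k : ℤ) - 2) / 2)) ≤
        u k :=
  stmt6_general a b ha u hu1 hurec M hM
end

section
/- Let S_k = 2 − 2^{−k}. If 2^M ≤ log(2T)/6 and a := (2T)^{1/S_{M−1}} · (log((2T)^{15/(2^M−1)}))^{1/4 − (3/4)/(2^M−1)}, then 15·a^{S_{M−2}} ≤ 2T. -/
/-!
Write `P = 2^M` and `L = log (2T)`, so that `L ≥ 6P`. Taking logarithms, the claim becomes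
`log 15 + S_{M-2} (L / S_{M-1} + e · log (15 L / (P - 1))) ≤ L` with `e = 1/4 - 3/(4(P - 1))`.
Since `S_{M-2} / S_{M-1} = (P - 2)/(P - 1) ≤ 1 - 1/P`, the main term costs at most `L - u` with
`u = L / P ≥ 6`, and since `S_{M-2} · e ≤ 1/2` and `15/(P - 1) ≤ 20/P`, the logarithmic term costs
at most `log (20 u) / 2`. What remains, `log 15 + log (20 u) / 2 ≤ u`, holds for `u ≥ 6`.
-/

open Real

lemma Sfun_natCast_sub {M n : ℕ} (h : n ≤ M) : Sfun ((M : ℤ) - n) = 2 - 2 ^ n / 2 ^ M := by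
  rw [Sfun, if_neg (by omega), neg_sub, zpow_sub₀ two_ne_zero, zpow_natCast, zpow_natCast]

lemma log_fifteen_add_half_log_le {u : ℝ} (hu : 6 ≤ u) : log 15 + log (20 * u) / 2 ≤ u := by
  have h27000 : log 27000 ≤ 12 := by
    rw [log_le_iff_le_exp (by norm_num)]
    calc (27000 : ℝ) ≤ 2.7 ^ 12 := by norm_num
      _ ≤ exp 1 ^ 12 := by gcongr; linarith [exp_one_gt_d9]
      _ = exp 12 := by rw [← exp_nat_mul]; norm_num
  have hsplit : 2 * log 15 + log (20 * u) = log 27000 + log (u / 6) := by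
    rw [← log_rpow (by norm_num), ← log_mul (by positivity) (by positivity),
      ← log_mul (by norm_num) (by positivity)]
    ring_nf
  linarith [log_le_sub_one_of_pos (show 0 < u / 6 by positivity)]

lemma two_sub_four_div_mul_one_div_le {P : ℝ} (hP : 2 < P) :
    (2 - 4 / P) * (1 / (2 - 2 / P)) ≤ 1 - 1 / P := by
  have hP0 : 0 < P := by linarith
  rw [mul_one_div, div_le_iff₀ ?_]
  · field_simp
    nlinarith
  · rw [sub_pos, div_lt_iff₀ hP0]
    linarith

lemma two_sub_four_div_mul_le_half {P : ℝ} (hP : 2 ≤ P) :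
    (2 - 4 / P) * (1 / 4 - 3 / 4 * (1 / (P - 1))) ≤ 1 / 2 := by
  have h4P : 0 ≤ 2 - 4 / P := by
    rw [sub_nonneg, div_le_iff₀ (by linarith)]
    linarith
  have hP1 : 0 ≤ 1 / (P - 1) := one_div_nonneg.2 (by linarith)
  nlinarith [mul_nonneg h4P hP1, div_nonneg zero_le_four (by linarith : (0 : ℝ) ≤ P)]

theorem fifteen_mul_rpow_le_s9 {X P : ℝ} (hX : 0 ≤ X) (hP : 4 ≤ P) (hPX : 6 * P ≤ log X) :
    15 * (X ^ (1 / (2 - 2 / P)) * log (X ^ (15 / (P - 1))) ^ (1 / 4 - 3 / 4 * (1 / (P - 1)))) ^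
      (2 - 4 / P) ≤ X := by
  have hX0 : 0 < X := one_pos.trans <| (log_pos_iff hX).1 (by linarith)
  have hL : 0 ≤ log X := by linarith
  have hu : 6 ≤ log X / P := by
    rw [le_div_iff₀ (by linarith)]
    linarith
  have hinner : 1 ≤ 15 / (P - 1) * log X := by
    rw [div_mul_eq_mul_div, le_div_iff₀ (by linarith)]
    nlinarith
  have hG : log (15 / (P - 1) * log X) ≤ log (20 * (log X / P)) := by
    apply log_le_log (by linarith)
    rw [mul_div_assoc', div_mul_eq_mul_div, div_le_div_iff₀ (by linarith) (by linarith)]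
    nlinarith
  rw [log_rpow hX0]
  set a := X ^ (1 / (2 - 2 / P)) * (15 / (P - 1) * log X) ^ (1 / 4 - 3 / 4 * (1 / (P - 1)))
  have ha : 0 < a := mul_pos (rpow_pos_of_pos hX0 _) (rpow_pos_of_pos (by linarith) _)
  rw [← log_le_log_iff (by positivity) hX0, log_mul (by norm_num) (by positivity),
    log_rpow ha, log_mul (by positivity) (by positivity), log_rpow hX0,
    log_rpow (by linarith : 0 < 15 / (P - 1) * log X)]
  calc log 15 + (2 - 4 / P) * (1 / (2 - 2 / P) * log X
          + (1 / 4 - 3 / 4 * (1 / (P - 1))) * log (15 / (P - 1) * log X))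
      = log 15 + (2 - 4 / P) * (1 / (2 - 2 / P)) * log X
          + (2 - 4 / P) * (1 / 4 - 3 / 4 * (1 / (P - 1))) * log (15 / (P - 1) * log X) := by
        ring
    _ ≤ log 15 + (1 - 1 / P) * log X + 1 / 2 * log (20 * (log X / P)) :=
        add_le_add
          (add_le_add_right
            (mul_le_mul_of_nonneg_right (two_sub_four_div_mul_one_div_le (by linarith)) hL) _)
          (mul_le_mul (two_sub_four_div_mul_le_half (by linarith)) hG (log_nonneg hinner)
            (by norm_num))
    _ ≤ log X := by
      rw [one_sub_mul, one_div_mul_eq_div]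
      linarith [log_fifteen_add_half_log_le hu]

theorem stmt9_general (T M : ℕ) (hM : 2 ≤ M)
    (hMT : (2 : ℝ) ^ M ≤ Real.log (2 * T) / 6) (a : ℝ)
    (ha : a = (2 * (T : ℝ)) ^ (1 / Sfun ((M : ℤ) - 1)) *
        (Real.log ((2 * (T : ℝ)) ^ ((15 : ℝ) / ((2 : ℝ) ^ M - 1)))) ^
          ((1 : ℝ) / 4 - (3 / 4) * (1 / ((2 : ℝ) ^ M - 1)))) :
    15 * a ^ Sfun ((M : ℤ) - 2) ≤ 2 * T := by
  have hS1 : Sfun ((M : ℤ) - 1) = 2 - 2 / 2 ^ M := by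
    simpa using Sfun_natCast_sub (M := M) (n := 1) (by omega)
  have hS2 : Sfun ((M : ℤ) - 2) = 2 - 4 / 2 ^ M := by
    simpa [show (2 : ℝ) ^ 2 = 4 by norm_num] using Sfun_natCast_sub (M := M) (n := 2) hM
  have hP : (4 : ℝ) ≤ 2 ^ M :=
    calc (4 : ℝ) = 2 ^ 2 := by norm_num
      _ ≤ 2 ^ M := pow_le_pow_right₀ one_le_two hM
  rw [ha, hS1, hS2]
  exact fifteen_mul_rpow_le_s9 (by positivity) hP (by linarith)

/-- Second property of the choice of `a` for the minimax grid:
if `2^M ≤ log(2T)/6` then `15 a^{S_{M-2}} ≤ 2T`. -/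
theorem stmt9 (T M : ℕ) (hT : 2 ≤ T) (hM : 2 ≤ M)
    (hMT : (2 : ℝ) ^ M ≤ Real.log (2 * T) / 6) (a : ℝ)
    (ha : a = (2 * (T : ℝ)) ^ (1 / Sfun ((M : ℤ) - 1)) *
        (Real.log ((2 * (T : ℝ)) ^ ((15 : ℝ) / ((2 : ℝ) ^ M - 1)))) ^
          ((1 : ℝ) / 4 - (3 / 4) * (1 / ((2 : ℝ) ^ M - 1)))) :
    15 * a ^ Sfun ((M : ℤ) - 2) ≤ 2 * T :=
  stmt9_general T M hM hMT a ha
end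

section
/- Fix a horizon T, a gap Δ ∈ (0,1], and a grid 0 = t_0 < t_1 < ... < t_M = T. For any M-batch policy on the two-armed Gaussian bandit with gap Δ, the regret satisfies R_T(Δ) ≥ Δ ∑_{j=1}^M (t_j − t_{j−1})·(1/4)·exp(−t_{j−1}Δ²/2) (and hence R_T(Δ) ≥ Δ·t_1/4 ≥ 0 in particular, with the paper's version summing t_j in place of t_j − t_{j−1} as an analogous bound). -/
/-!
An action of batch `m` is a function of the rewards of the rounds before `k = t (m - 1)` (of both
arms, which is more than the policy observes), so its probability under either environment only
involves those `k` rounds. The Hellinger affinity of `N(Δ,1) ⊗ N(0,1)` and `N(0,1) ⊗ N(Δ,1)` is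
`exp (-Δ² / 4)` and affinities multiply over product measures; Le Cam's bound combined with
Cauchy–Schwarz gives `P₁ Aᶜ + P₂ A ≥ affinity² / 2 = exp (-k Δ² / 2) / 2` for such events `A`.
Summing over the rounds of each batch bounds the sum of the two regrets, hence twice their maximum.
-/

open MeasureTheory ProbabilityTheory Finset

/-- The two Gaussian two-armed bandit environments with gap `Δ` over horizon `T`:
`ω u` lists the (unobserved) rewards of arm 1 and arm 2 at time `u`. Under
`env T Δ true`, arm 1 has law `N(Δ,1)` and arm 2 has law `N(0,1)`; under
`env T Δ false` the roles are swapped, so arm `i` is optimal under `env T Δ i`. -/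
noncomputable def env (T : ℕ) (Δ : ℝ) (i : Bool) : Measure (Fin T → ℝ × ℝ) :=
  Measure.pi fun _ =>
    (gaussianReal (if i then Δ else 0) 1).prod (gaussianReal (if i then 0 else Δ) 1)

/-- The reward observed at time `u` by the policy `π` (`π u ω = true` means arm 1
is pulled at time `u`). -/
def obs {T : ℕ} (π : Fin T → (Fin T → ℝ × ℝ) → Bool) (u : Fin T)
    (ω : Fin T → ℝ × ℝ) : ℝ :=
  if π u ω then (ω u).1 else (ω u).2

/-- The σ-algebra generated by the rewards observed by `π` during the first `k`
rounds. -/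
def obsHistory {T : ℕ} (π : Fin T → (Fin T → ℝ × ℝ) → Bool) (k : ℕ) :
    MeasurableSpace (Fin T → ℝ × ℝ) :=
  ⨆ u : Fin T, ⨆ _ : (u : ℕ) < k, MeasurableSpace.comap (obs π u) inferInstance

open scoped ENNReal

section Hellinger

variable {α : Type*} [MeasurableSpace α]

noncomputable def hellingerAffinity (ρ : Measure α) (f g : α → ℝ≥0∞) : ℝ≥0∞ :=
  ∫⁻ x, f x ^ (1 / 2 : ℝ) * g x ^ (1 / 2 : ℝ) ∂ρ

theorem sq_hellingerAffinity_le (ρ : Measure α) {f g : α → ℝ≥0∞} (hf : AEMeasurable f ρ)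
    (hg : AEMeasurable g ρ) {s : Set α} (hs : MeasurableSet s) :
    hellingerAffinity ρ f g ^ 2 ≤
      (ρ.withDensity f sᶜ + ρ.withDensity g s) *
        (ρ.withDensity f Set.univ + ρ.withDensity g Set.univ) := by
  have hmin : ∫⁻ x, min (f x) (g x) ∂ρ ≤ ρ.withDensity f sᶜ + ρ.withDensity g s := by
    rw [withDensity_apply _ hs.compl, withDensity_apply _ hs, ← lintegral_add_compl _ hs,
      add_comm]
    exact add_le_add (lintegral_mono fun x => min_le_left _ _)
      (lintegral_mono fun x => min_le_right _ _)
  have hmax : ∫⁻ x, max (f x) (g x) ∂ρ ≤ ρ.withDensity f Set.univ + ρ.withDensity g Set.univ := by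
    rw [withDensity_apply _ MeasurableSet.univ, withDensity_apply _ MeasurableSet.univ,
      Measure.restrict_univ, ← lintegral_add_left' hf]
    exact lintegral_mono fun x => max_le le_self_add le_add_self
  -- Cauchy–Schwarz for `√f √g = √(min f g) √(max f g)`.
  have hCS : hellingerAffinity ρ f g ≤
      (∫⁻ x, min (f x) (g x) ∂ρ) ^ (1 / 2 : ℝ) * (∫⁻ x, max (f x) (g x) ∂ρ) ^ (1 / 2 : ℝ) := by
    have hminmax : ∀ x, f x ^ (1 / 2 : ℝ) * g x ^ (1 / 2 : ℝ) =
        min (f x) (g x) ^ (1 / 2 : ℝ) * max (f x) (g x) ^ (1 / 2 : ℝ) := fun x => by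
      rcases le_total (f x) (g x) with h | h
      · rw [min_eq_left h, max_eq_right h]
      · rw [min_eq_right h, max_eq_left h, mul_comm]
    simp_rw [hellingerAffinity, hminmax]
    exact ENNReal.lintegral_mul_norm_pow_le (hf.min hg) (hf.max hg) (by norm_num) (by norm_num)
      (by norm_num)
  have hsq : ∀ a : ℝ≥0∞, (a ^ (1 / 2 : ℝ)) ^ 2 = a := fun a => by
    rw [← ENNReal.rpow_natCast, ← ENNReal.rpow_mul]; norm_num
  calc hellingerAffinity ρ f g ^ 2
      ≤ ((∫⁻ x, min (f x) (g x) ∂ρ) ^ (1 / 2 : ℝ) *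
          (∫⁻ x, max (f x) (g x) ∂ρ) ^ (1 / 2 : ℝ)) ^ 2 := by
        gcongr
    _ = (∫⁻ x, min (f x) (g x) ∂ρ) * ∫⁻ x, max (f x) (g x) ∂ρ := by rw [mul_pow, hsq, hsq]
    _ ≤ _ := mul_le_mul' hmin hmax

end Hellinger

section Pi

variable {ι : Type*} [Fintype ι] {α : ι → Type*} [∀ i, MeasurableSpace (α i)]
  (ρ : ∀ i, Measure (α i)) [∀ i, IsProbabilityMeasure (ρ i)]

theorem lintegral_pi_prod {f : ∀ i, α i → ℝ≥0∞} (hf : ∀ i, Measurable (f i)) :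
    ∫⁻ x, ∏ i, f i (x i) ∂Measure.pi ρ = ∏ i, ∫⁻ y, f i y ∂ρ i := by
  rw [lintegral_prod_eq_prod_lintegral_of_indepFun _ _
    (iIndepFun_pi fun i => (hf i).aemeasurable) fun i => (hf i).comp (measurable_pi_apply i)]
  exact prod_congr rfl fun i _ => (measurePreserving_eval ρ i).lintegral_comp (hf i)

theorem pi_eq_withDensity_prod {μ : ∀ i, Measure (α i)} [∀ i, SigmaFinite (μ i)]
    {f : ∀ i, α i → ℝ≥0∞} (hf : ∀ i, Measurable (f i)) (hμ : ∀ i, μ i = (ρ i).withDensity (f i)) :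
    Measure.pi μ = (Measure.pi ρ).withDensity fun x => ∏ i, f i (x i) := by
  refine Measure.pi_eq fun s hs => ?_
  have hind : (Set.univ.pi s).indicator (fun x => ∏ i, f i (x i)) =
      fun x => ∏ i, (s i).indicator (f i) (x i) := by
    funext x
    by_cases hx : x ∈ Set.univ.pi s
    · rw [Set.indicator_of_mem hx]
      exact prod_congr rfl fun i _ => (Set.indicator_of_mem (hx i (Set.mem_univ i)) _).symm
    · rw [Set.indicator_of_notMem hx]
      obtain ⟨i, -, hi⟩ := by simpa only [Set.mem_pi, not_forall] using hx
      exact (prod_eq_zero (mem_univ i) (Set.indicator_of_notMem hi _)).symm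
  rw [withDensity_apply _ (.univ_pi hs), ← lintegral_indicator (.univ_pi hs), hind,
    lintegral_pi_prod ρ fun i => (hf i).indicator (hs i)]
  exact prod_congr rfl fun i _ => by rw [hμ, withDensity_apply _ (hs i), lintegral_indicator (hs i)]

theorem hellingerAffinity_pi {f g : ∀ i, α i → ℝ≥0∞} (hf : ∀ i, Measurable (f i))
    (hg : ∀ i, Measurable (g i)) :
    hellingerAffinity (Measure.pi ρ) (fun x => ∏ i, f i (x i)) (fun x => ∏ i, g i (x i)) =
      ∏ i, hellingerAffinity (ρ i) (f i) (g i) := by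
  simp_rw [hellingerAffinity, ← ENNReal.prod_rpow_of_nonneg (by norm_num : (0 : ℝ) ≤ 1 / 2),
    ← prod_mul_distrib]
  exact lintegral_pi_prod ρ fun i => ((hf i).pow_const _).mul ((hg i).pow_const _)

theorem sq_prod_hellingerAffinity_le {μ ν : ∀ i, Measure (α i)} [∀ i, SigmaFinite (μ i)]
    [∀ i, SigmaFinite (ν i)] {f g : ∀ i, α i → ℝ≥0∞} (hf : ∀ i, Measurable (f i))
    (hg : ∀ i, Measurable (g i)) (hμ : ∀ i, μ i = (ρ i).withDensity (f i))
    (hν : ∀ i, ν i = (ρ i).withDensity (g i)) {s : Set (∀ i, α i)} (hs : MeasurableSet s) :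
    (∏ i, hellingerAffinity (ρ i) (f i) (g i)) ^ 2 ≤
      (Measure.pi μ sᶜ + Measure.pi ν s) * (Measure.pi μ Set.univ + Measure.pi ν Set.univ) := by
  rw [← hellingerAffinity_pi ρ hf hg, pi_eq_withDensity_prod ρ hf hμ,
    pi_eq_withDensity_prod ρ hg hν]
  exact sq_hellingerAffinity_le _
    (Finset.measurable_prod _ fun i _ => (hf i).comp (measurable_pi_apply i)).aemeasurable
    (Finset.measurable_prod _ fun i _ => (hg i).comp (measurable_pi_apply i)).aemeasurable hs

end Pi

section Truncation

variable {T : ℕ} {α : Type*} [MeasurableSpace α]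

def truncate (k : ℕ) (c : α) (ω : Fin T → α) : Fin T → α :=
  fun u => if (u : ℕ) < k then ω u else c

theorem measurable_truncate (k : ℕ) (c : α) : Measurable (truncate (T := T) k c) := by
  refine measurable_pi_lambda _ fun u => ?_
  by_cases hu : (u : ℕ) < k
  · simpa only [truncate, if_pos hu] using measurable_pi_apply u
  · simpa only [truncate, if_neg hu] using measurable_const

theorem pi_apply_eq_of_truncate_preimage_eq {μ ν : Fin T → Measure α}
    [∀ u, IsProbabilityMeasure (μ u)] [∀ u, IsProbabilityMeasure (ν u)] {k : ℕ}
    (hμν : ∀ u : Fin T, (u : ℕ) < k → μ u = ν u) {c : α} {s : Set (Fin T → α)}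
    (hs : MeasurableSet s) (hsk : truncate k c ⁻¹' s = s) :
    Measure.pi μ s = Measure.pi ν s := by
  let f : Fin T → α → α := fun u => if (u : ℕ) < k then id else fun _ => c
  have hf : ∀ u, Measurable (f u) := fun u => by
    by_cases hu : (u : ℕ) < k
    · simpa only [f, if_pos hu] using measurable_id
    · simpa only [f, if_neg hu] using measurable_const
  have htruncate : truncate k c = fun ω u => f u (ω u) := by
    funext ω u
    by_cases hu : (u : ℕ) < k <;> simp [truncate, f, hu]
  have hmap : (fun u => (μ u).map (f u)) = fun u => (ν u).map (f u) := by
    funext u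
    by_cases hu : (u : ℕ) < k
    · rw [hμν u hu]
    · simp only [f, if_neg hu, Measure.map_const, measure_univ]
  have := fun u => Measure.isProbabilityMeasure_map (μ := μ u) (hf u).aemeasurable
  have := fun u => Measure.isProbabilityMeasure_map (μ := ν u) (hf u).aemeasurable
  rw [← hsk, ← Measure.map_apply (measurable_truncate k c) hs,
    ← Measure.map_apply (measurable_truncate k c) hs, htruncate,
    Measure.pi_map_pi fun u => (hf u).aemeasurable, Measure.pi_map_pi fun u => (hf u).aemeasurable,
    hmap]

end Truncation

section Gaussian

noncomputable def gaussianLikelihoodRatio (μ x : ℝ) : ℝ≥0∞ :=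
  ENNReal.ofReal (Real.exp (μ * x - μ ^ 2 / 2))

theorem measurable_gaussianLikelihoodRatio (μ : ℝ) : Measurable (gaussianLikelihoodRatio μ) := by
  unfold gaussianLikelihoodRatio
  fun_prop

theorem gaussianReal_eq_withDensity_gaussianLikelihoodRatio (μ : ℝ) :
    gaussianReal μ 1 = (gaussianReal 0 1).withDensity (gaussianLikelihoodRatio μ) := by
  rw [gaussianReal_of_var_ne_zero _ one_ne_zero, gaussianReal_of_var_ne_zero _ one_ne_zero,
    ← withDensity_mul _ (measurable_gaussianPDF _ _) (measurable_gaussianLikelihoodRatio μ)]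
  congr 1
  funext x
  rw [Pi.mul_apply, gaussianPDF, gaussianPDF, gaussianLikelihoodRatio,
    ← ENNReal.ofReal_mul (gaussianPDFReal_nonneg _ _ _), gaussianPDFReal, gaussianPDFReal,
    mul_assoc _ (Real.exp _), ← Real.exp_add]
  congr 3
  push_cast
  ring

theorem lintegral_sqrt_gaussianLikelihoodRatio (μ : ℝ) :
    ∫⁻ x, gaussianLikelihoodRatio μ x ^ (1 / 2 : ℝ) ∂gaussianReal 0 1 =
      ENNReal.ofReal (Real.exp (-μ ^ 2 / 8)) := by
  have hsqrt : ∀ x, gaussianLikelihoodRatio μ x ^ (1 / 2 : ℝ) =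
      ENNReal.ofReal (Real.exp (μ / 2 * x)) * ENNReal.ofReal (Real.exp (-μ ^ 2 / 4)) := fun x => by
    rw [gaussianLikelihoodRatio, ENNReal.ofReal_rpow_of_nonneg (Real.exp_nonneg _) (by norm_num),
      ← Real.exp_mul, ← ENNReal.ofReal_mul (Real.exp_nonneg _), ← Real.exp_add]
    congr 2
    ring
  have hmgf : ∫ x, Real.exp (μ / 2 * x) ∂gaussianReal 0 1 = Real.exp ((μ / 2) ^ 2 / 2) := by
    simpa [mgf] using congrFun (mgf_fun_id_gaussianReal (μ := 0) (v := 1)) (μ / 2)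
  simp_rw [hsqrt]
  rw [lintegral_mul_const _ (by fun_prop), ← ofReal_integral_eq_lintegral_ofReal
    (integrable_exp_mul_gaussianReal _) (Filter.Eventually.of_forall fun _ => Real.exp_nonneg _),
    hmgf, ← ENNReal.ofReal_mul (Real.exp_nonneg _), ← Real.exp_add]
  congr 2
  ring

end Gaussian

section Bandit

variable {T : ℕ}

local notation "γ₂" => Measure.prod (gaussianReal 0 1) (gaussianReal 0 1)

instance (Δ : ℝ) (i : Bool) : IsProbabilityMeasure (env T Δ i) := by
  unfold env
  infer_instance

theorem env_factor_eq_withDensity (Δ : ℝ) (i : Bool) :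
    (gaussianReal (if i then Δ else 0) 1).prod (gaussianReal (if i then 0 else Δ) 1) =
      Measure.withDensity γ₂ fun z => gaussianLikelihoodRatio Δ (if i then z.1 else z.2) := by
  cases i <;> simp only [if_true, Bool.false_eq_true, if_false] <;>
    rw [gaussianReal_eq_withDensity_gaussianLikelihoodRatio Δ]
  · exact prod_withDensity_right (measurable_gaussianLikelihoodRatio Δ)
  · exact prod_withDensity_left (measurable_gaussianLikelihoodRatio Δ)

theorem hellingerAffinity_env_factor (Δ : ℝ) :
    hellingerAffinity γ₂ (fun z => gaussianLikelihoodRatio Δ z.1)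
        (fun z => gaussianLikelihoodRatio Δ z.2) =
      ENNReal.ofReal (Real.exp (-Δ ^ 2 / 4)) := by
  have hm : Measurable fun x => gaussianLikelihoodRatio Δ x ^ (1 / 2 : ℝ) :=
    (measurable_gaussianLikelihoodRatio Δ).pow_const _
  rw [hellingerAffinity, lintegral_prod_mul hm.aemeasurable hm.aemeasurable,
    lintegral_sqrt_gaussianLikelihoodRatio, ← ENNReal.ofReal_mul (Real.exp_nonneg _),
    ← Real.exp_add]
  congr 2
  ring

/-- The density with respect to `N(0,1) ⊗ N(0,1)` of the rewards of round `u` under `env T Δ i`,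
except that from round `k` on both arms are made `N(0,1)`. -/
noncomputable def truncatedEnvDensity (Δ : ℝ) (k : ℕ) (i : Bool) (u : Fin T) (z : ℝ × ℝ) :
    ℝ≥0∞ :=
  if (u : ℕ) < k then gaussianLikelihoodRatio Δ (if i then z.1 else z.2) else 1

theorem measurable_truncatedEnvDensity (Δ : ℝ) (k : ℕ) (i : Bool) (u : Fin T) :
    Measurable (truncatedEnvDensity Δ k i u) := by
  refine Measurable.ite (.const _) ?_ measurable_const
  cases i
  exacts [(measurable_gaussianLikelihoodRatio Δ).comp measurable_snd,
    (measurable_gaussianLikelihoodRatio Δ).comp measurable_fst]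

theorem truncatedEnvDensity_of_lt {Δ : ℝ} {k : ℕ} {i : Bool} {u : Fin T} (hu : (u : ℕ) < k) :
    truncatedEnvDensity Δ k i u = fun z => gaussianLikelihoodRatio Δ (if i then z.1 else z.2) :=
  funext fun _ => if_pos hu

theorem truncatedEnvDensity_of_le {Δ : ℝ} {k : ℕ} {i : Bool} {u : Fin T} (hu : k ≤ (u : ℕ)) :
    truncatedEnvDensity Δ k i u = 1 :=
  funext fun _ => if_neg (not_lt.2 hu)

theorem withDensity_truncatedEnvDensity (Δ : ℝ) (k : ℕ) (i : Bool) (u : Fin T) :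
    Measure.withDensity γ₂ (truncatedEnvDensity Δ k i u) =
      if (u : ℕ) < k then
        (gaussianReal (if i then Δ else 0) 1).prod (gaussianReal (if i then 0 else Δ) 1)
      else γ₂ := by
  by_cases hu : (u : ℕ) < k
  · rw [if_pos hu, env_factor_eq_withDensity, truncatedEnvDensity_of_lt hu]
  · rw [if_neg hu, truncatedEnvDensity_of_le (not_lt.1 hu), withDensity_one]

instance (Δ : ℝ) (k : ℕ) (i : Bool) (u : Fin T) :
    IsProbabilityMeasure (Measure.withDensity γ₂ (truncatedEnvDensity Δ k i u)) := by
  rw [withDensity_truncatedEnvDensity]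
  split_ifs <;> infer_instance

theorem hellingerAffinity_truncatedEnvDensity (Δ : ℝ) (k : ℕ) (u : Fin T) :
    hellingerAffinity γ₂ (truncatedEnvDensity Δ k true u) (truncatedEnvDensity Δ k false u) =
      if (u : ℕ) < k then ENNReal.ofReal (Real.exp (-Δ ^ 2 / 4)) else 1 := by
  by_cases hu : (u : ℕ) < k
  · simpa only [truncatedEnvDensity_of_lt hu, if_pos hu, if_true, Bool.false_eq_true, if_false]
      using hellingerAffinity_env_factor Δ
  · simp [truncatedEnvDensity_of_le (not_lt.1 hu), hu, hellingerAffinity]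

theorem ofReal_exp_le_env_compl_add_env (Δ : ℝ) {k : ℕ} {s : Set (Fin T → ℝ × ℝ)}
    (hs : MeasurableSet s) (hsk : truncate k (0, 0) ⁻¹' s = s) :
    ENNReal.ofReal (Real.exp (-(k * Δ ^ 2) / 2)) ≤ 2 * (env T Δ true sᶜ + env T Δ false s) := by
  have henv : ∀ i, env T Δ i s =
      Measure.pi (fun u => Measure.withDensity γ₂ (truncatedEnvDensity Δ k i u)) s := fun i =>
    pi_apply_eq_of_truncate_preimage_eq
      (fun u hu => by rw [withDensity_truncatedEnvDensity, if_pos hu]) hs hsk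
  have henv_compl : ∀ i, env T Δ i sᶜ =
      Measure.pi (fun u => Measure.withDensity γ₂ (truncatedEnvDensity Δ k i u)) sᶜ := fun i => by
    rw [measure_compl hs (measure_ne_top _ _), measure_compl hs (measure_ne_top _ _), henv,
      measure_univ, measure_univ]
  have hbound := sq_prod_hellingerAffinity_le (fun _ => γ₂)
    (measurable_truncatedEnvDensity Δ k true) (measurable_truncatedEnvDensity Δ k false)
    (fun _ => rfl) (fun _ => rfl) hs
  simp only [hellingerAffinity_truncatedEnvDensity, prod_ite, prod_const, one_pow, mul_one,
    measure_univ, Fin.card_filter_val_lt] at hbound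
  rw [henv_compl, henv]
  calc ENNReal.ofReal (Real.exp (-(k * Δ ^ 2) / 2))
      ≤ ENNReal.ofReal (Real.exp (-(min T k * Δ ^ 2) / 2)) := by
        gcongr
        exact_mod_cast min_le_right T k
    _ = (ENNReal.ofReal (Real.exp (-Δ ^ 2 / 4)) ^ min T k) ^ 2 := by
        rw [← ENNReal.ofReal_pow (Real.exp_nonneg _), ← ENNReal.ofReal_pow (by positivity),
          ← Real.exp_nat_mul, ← Real.exp_nat_mul]
        congr 2
        push_cast
        ring
    _ ≤ _ := hbound.trans_eq (by rw [one_add_one_eq_two, mul_comm])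

end Bandit

section Policy

variable {T : ℕ}

def Nonanticipating (π : Fin T → (Fin T → ℝ × ℝ) → Bool) : Prop :=
  ∀ v : Fin T, ∃ j ≤ (v : ℕ), Measurable[obsHistory π j] (π v)

theorem obsHistory_le_invariants {π : Fin T → (Fin T → ℝ × ℝ) → Bool} (hπ : Nonanticipating π)
    {k : ℕ} {σ : (Fin T → ℝ × ℝ) → Fin T → ℝ × ℝ}
    (hσ : ∀ ω (w : Fin T), (w : ℕ) < k → σ ω w = ω w) :
    obsHistory π k ≤ MeasurableSpace.invariants σ := by
  suffices h : ∀ j ≤ k, obsHistory π j ≤ MeasurableSpace.invariants σ from h k le_rfl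
  intro j
  induction j using Nat.strong_induction_on with
  | _ j ih =>
    intro hj
    refine iSup₂_le fun w hw => Measurable.comap_le ?_
    obtain ⟨i, hiw, hπw⟩ := hπ w
    replace hπw : Measurable[MeasurableSpace.invariants σ] (π w) :=
      hπw.mono (ih i (by omega) (by omega)) le_rfl
    have hπσ : ∀ ω, π w (σ ω) = π w ω :=
      congrFun (MeasurableSpace.comp_eq_of_measurable_invariants hπw)
    have hobs : obs π w ∘ σ = obs π w := by
      funext ω
      simp only [Function.comp_apply, obs, hσ ω w (by omega), hπσ]
    refine MeasurableSpace.measurable_invariants_dom.2 ⟨?_, fun s _ => by rw [hobs]⟩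
    exact Measurable.ite (hπw.mono (MeasurableSpace.invariants_le σ) le_rfl
      (measurableSet_singleton true)) (measurable_pi_apply w).fst (measurable_pi_apply w).snd

theorem exp_le_two_mul_env_add_env (Δ : ℝ) {π : Fin T → (Fin T → ℝ × ℝ) → Bool}
    (hπ : Nonanticipating π) {k : ℕ} {u : Fin T} (hu : Measurable[obsHistory π k] (π u)) :
    Real.exp (-(k * Δ ^ 2) / 2) ≤
      2 * ((env T Δ true {ω | π u ω ≠ true}).toReal +
        (env T Δ false {ω | π u ω ≠ false}).toReal) := by
  have hinv : Measurable[MeasurableSpace.invariants (truncate k ((0 : ℝ), (0 : ℝ)))] (π u) :=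
    hu.mono (obsHistory_le_invariants hπ fun ω w hw => if_pos hw) le_rfl
  obtain ⟨hs, hsk⟩ :=
    MeasurableSpace.measurableSet_invariants.1 (hinv (measurableSet_singleton true))
  have h := ofReal_exp_le_env_compl_add_env Δ hs hsk
  have h1 : {ω | π u ω ≠ true} = (π u ⁻¹' {true})ᶜ := by ext; simp
  have h2 : {ω | π u ω ≠ false} = π u ⁻¹' {true} := by ext; simp
  rw [h1, h2, ← ENNReal.toReal_add (measure_ne_top _ _) (measure_ne_top _ _)]
  rw [ENNReal.ofReal_le_iff_le_toReal (by finiteness)] at h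
  simpa [ENNReal.toReal_mul] using h

end Policy

section Batches

variable {t : ℕ → ℕ} {M : ℕ}

theorem exists_mem_Icc_of_lt_apply (h0 : t 0 = 0) {n : ℕ} (hn : n < t M) :
    ∃ m ∈ Icc 1 M, t (m - 1) ≤ n ∧ n < t m := by
  induction M with
  | zero => simp [h0] at hn
  | succ M ih =>
    by_cases h : n < t M
    · obtain ⟨m, hm, hmn⟩ := ih h
      exact ⟨m, by simp only [mem_Icc] at hm ⊢; omega, hmn⟩
    · exact ⟨M + 1, by simp, by simpa using h, hn⟩

theorem apply_le_apply_of_le (ht : ∀ j < M, t j ≤ t (j + 1)) {m : ℕ} (hm : m ≤ M) :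
    t m ≤ t M := by
  induction M with
  | zero => rw [Nat.le_zero.1 hm]
  | succ M ih =>
    rcases hm.eq_or_lt with rfl | hm
    · rfl
    · exact (ih (fun j hj => ht j (by omega)) (by omega)).trans (ht M (by omega))

theorem sum_range_eq_sum_Icc_sum_Ico {β : Type*} [AddCommMonoid β] (h0 : t 0 = 0)
    (ht : ∀ j < M, t j ≤ t (j + 1)) (f : ℕ → β) :
    ∑ n ∈ range (t M), f n = ∑ m ∈ Icc 1 M, ∑ n ∈ Ico (t (m - 1)) (t m), f n := by
  induction M with
  | zero => simp [h0]
  | succ M ih =>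
    rw [sum_Icc_succ_top (by omega), ← ih fun j hj => ht j (by omega), Nat.add_sub_cancel,
      sum_range_add_sum_Ico _ (ht M (by omega))]

theorem sum_Icc_sub_mul_le_sum (h0 : t 0 = 0) (ht : ∀ j < M, t j ≤ t (j + 1))
    {a : Fin (t M) → ℝ} {b : ℕ → ℝ}
    (hab : ∀ m ∈ Icc 1 M, ∀ u : Fin (t M), t (m - 1) ≤ u → (u : ℕ) < t m → b m ≤ a u) :
    ∑ m ∈ Icc 1 M, ((t m : ℝ) - t (m - 1)) * b m ≤ ∑ u, a u := by
  calc ∑ m ∈ Icc 1 M, ((t m : ℝ) - t (m - 1)) * b m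
      ≤ ∑ n ∈ range (t M), if h : n < t M then a ⟨n, h⟩ else 0 := by
        rw [sum_range_eq_sum_Icc_sum_Ico h0 ht]
        refine sum_le_sum fun m hm => ?_
        have hm' := mem_Icc.1 hm
        have hle : t (m - 1) ≤ t m := by
          simpa [Nat.sub_add_cancel hm'.1] using ht (m - 1) (by omega)
        have hnM : ∀ n ∈ Ico (t (m - 1)) (t m), n < t M := fun n hn =>
          (mem_Ico.1 hn).2.trans_le (apply_le_apply_of_le ht hm'.2)
        have := card_nsmul_le_sum _ (fun n => if h : n < t M then a ⟨n, h⟩ else 0) (b m)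
          fun n hn => by
            rw [dif_pos (hnM n hn)]
            exact hab m hm ⟨n, hnM n hn⟩ (mem_Ico.1 hn).1 (mem_Ico.1 hn).2
        rwa [Nat.card_Ico, nsmul_eq_mul, Nat.cast_sub hle] at this
    _ = ∑ u, a u := by
        rw [← Fin.sum_univ_eq_sum_range (fun n => if h : n < t M then a ⟨n, h⟩ else 0)]
        simp

end Batches

theorem stmt18_general (T M : ℕ)
    (Δ : ℝ) (hΔ : Δ ∈ Set.Ioc (0 : ℝ) 1)
    (t : ℕ → ℕ) (h0 : t 0 = 0) (hTM : t M = T) (hmono : ∀ j < M, t j < t (j + 1))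
    (π : Fin T → (Fin T → ℝ × ℝ) → Bool)
    (hbatch : ∀ m ∈ Finset.Icc 1 M, ∀ u : Fin T,
      t (m - 1) ≤ (u : ℕ) → (u : ℕ) < t m →
        Measurable[obsHistory π (t (m - 1))] (π u)) :
    Δ * ∑ j ∈ Finset.Icc 1 M, ((t j : ℝ) - (t (j - 1) : ℝ)) * (1 / 4) *
        Real.exp (-((t (j - 1) : ℝ) * Δ ^ 2) / 2) ≤
      max (Δ * ∑ u : Fin T, ((env T Δ true) {ω | π u ω ≠ true}).toReal)
        (Δ * ∑ u : Fin T, ((env T Δ false) {ω | π u ω ≠ false}).toReal) := by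
  subst hTM
  have hπ : Nonanticipating π := fun v => by
    obtain ⟨m, hm, hmv, hvm⟩ := exists_mem_Icc_of_lt_apply h0 v.isLt
    exact ⟨t (m - 1), hmv, hbatch m hm v hmv hvm⟩
  have hsum := sum_Icc_sub_mul_le_sum h0 (fun j hj => (hmono j hj).le)
    (a := fun u => ((env (t M) Δ true {ω | π u ω ≠ true}).toReal +
      (env (t M) Δ false {ω | π u ω ≠ false}).toReal) / 2)
    (b := fun m => 1 / 4 * Real.exp (-((t (m - 1) : ℝ) * Δ ^ 2) / 2))
    fun m hm u hmu hum => by linarith [exp_le_two_mul_env_add_env Δ hπ (hbatch m hm u hmu hum)]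
  rw [← sum_div, sum_add_distrib] at hsum
  simp only [← mul_assoc] at hsum
  calc _ ≤ Δ * ((∑ u, (env (t M) Δ true {ω | π u ω ≠ true}).toReal +
          ∑ u, (env (t M) Δ false {ω | π u ω ≠ false}).toReal) / 2) := by
        gcongr
        exact hΔ.1.le
    _ ≤ _ := by
        rw [← mul_div_assoc, mul_add, div_le_iff₀' two_pos, two_mul]
        exact add_le_add (le_max_left _ _) (le_max_right _ _)

/-- Lower bound on the worst-case regret of any `M`-batch policy on the two-armed
Gaussian bandit with gap `Δ`: for some environment, the regret is at least
`Δ ∑_{j=1}^M (t_j - t_{j-1}) (1/4) exp(-t_{j-1} Δ² / 2)`. A policy is `M`-batch for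
the grid `0 = t₀ < t₁ < ... < t_M = T` if its action at each time in batch `m`
(i.e., with `t_{m-1} ≤ u < t_m` in 0-indexed time) is measurable with respect to the
rewards observed strictly before the batch. -/
theorem stmt18 (T M : ℕ) (hT : 1 ≤ T) (hM : 1 ≤ M)
    (Δ : ℝ) (hΔ : Δ ∈ Set.Ioc (0 : ℝ) 1)
    (t : ℕ → ℕ) (h0 : t 0 = 0) (hTM : t M = T) (hmono : ∀ j < M, t j < t (j + 1))
    (π : Fin T → (Fin T → ℝ × ℝ) → Bool)
    (hbatch : ∀ m ∈ Finset.Icc 1 M, ∀ u : Fin T,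
      t (m - 1) ≤ (u : ℕ) → (u : ℕ) < t m →
        Measurable[obsHistory π (t (m - 1))] (π u)) :
    Δ * ∑ j ∈ Finset.Icc 1 M, ((t j : ℝ) - (t (j - 1) : ℝ)) * (1 / 4) *
        Real.exp (-((t (j - 1) : ℝ) * Δ ^ 2) / 2) ≤
      max (Δ * ∑ u : Fin T, ((env T Δ true) {ω | π u ω ≠ true}).toReal)
        (Δ * ∑ u : Fin T, ((env T Δ false) {ω | π u ω ≠ false}).toReal) :=
  stmt18_general T M Δ hΔ t h0 hTM hmono π hbatch
end
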